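/- Let A = {a,b,c}, m ≥ 4, and q ∈ ℕ with q ≥ 1. Let u be any partial word of length m over A that starts and ends with a, whose every defined position carries the letter a (i.e., u is obtained from a⋄^{m-2}a by filling some holes with a's). Then the set {u, b⋄^{m-2}b, c⋄^{m-2}c, a⋄^{m-2}b, a⋄^{m-2}c, b⋄^{m-2}c} is unavoidable over A. -/
import Mathlib


/-- The three-letter alphabet. -/
inductive ABC | a | b | c
deriving DecidableEq
open ABC

/-- A partial word of length `m` over alphabet `A`. -/
abbrev PW (m : ℕ) (A : Type) := Fin m → Option A

/-- A two-sided infinite word `w` meets a partial word `u`. -/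
def Meets {m : ℕ} {A : Type} (w : ℤ → A) (u : PW m A) : Prop :=
  ∃ i : ℤ, ∀ j : Fin m, ∀ x : A, u j = some x → w (i + (j : ℕ)) = x

/-- A set of partial words is unavoidable over `A`. -/
def Unavoidable {m : ℕ} {A : Type} (X : Set (PW m A)) : Prop :=
  ∀ w : ℤ → A, ∃ u ∈ X, Meets w u

/-- A set of partial words is avoidable over `A`. -/
def Avoidable {m : ℕ} {A : Type} (X : Set (PW m A)) : Prop :=
  ∃ w : ℤ → A, ∀ u ∈ X, ¬ Meets w u

/-- The partial word `x ⋄^(m-2) y` of length `m`: first letter `x`, last letter `y`,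
holes in between. -/
def oneHole {A : Type} (m : ℕ) (x y : A) : PW m A :=
  fun j => if (j : ℕ) = 0 then some x else if (j : ℕ) = m - 1 then some y else none

/-- The partial word `x ⋄^(p-1) d ⋄^(m-p-2) y` of length `m`: first letter `x`,
letter `d` at position `p`, last letter `y`, holes elsewhere. -/
def twoDef {A : Type} (m : ℕ) (x d y : A) (p : ℕ) : PW m A :=
  fun j => if (j : ℕ) = 0 then some x else if (j : ℕ) = p then some d
    else if (j : ℕ) = m - 1 then some y else none

/-- The two-sided infinite word of period `P` repeating the block `f` (given on `[0, P)`). -/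
def periodic {A : Type} (P : ℕ) (f : ℕ → A) : ℤ → A :=
  fun i => f ((i % (P : ℤ)).toNat)

lemma meets_of_pair {m : ℕ} (hm : 4 ≤ m) (w : ℤ → ABC) (x y : ABC) (i : ℤ)
    (hx : w i = x) (hy : w (i + ((m - 1 : ℕ) : ℤ)) = y) : Meets w (oneHole m x y) := by
  refine ⟨i, ?_⟩
  intro j z hj
  unfold oneHole at hj
  split_ifs at hj with h0 h1
  · injection hj with h; subst h
    rw [h0]; simpa using hx
  · injection hj with h; subst h
    rw [h1]; exact hy

/-- Filling any holes of a⋄^(m-2)a with a's keeps the minimal ternary set unavoidable. -/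
theorem stmt_2 (m q : ℕ) (hm : 4 ≤ m) (hq : 1 ≤ q) (u : PW m ABC)
    (hu0 : u ⟨0, by omega⟩ = some a) (hum : u ⟨m - 1, by omega⟩ = some a)
    (hua : ∀ j, ∀ x : ABC, u j = some x → x = a) :
    Unavoidable ({u, oneHole m b b, oneHole m c c,
                  oneHole m a b, oneHole m a c, oneHole m b c} : Set (PW m ABC)) := by
  intro w
  by_cases hbb : Meets w (oneHole m b b)
  · exact ⟨_, by simp, hbb⟩
  by_cases hcc : Meets w (oneHole m c c)
  · exact ⟨_, by simp, hcc⟩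
  by_cases hab : Meets w (oneHole m a b)
  · exact ⟨_, by simp, hab⟩
  by_cases hac : Meets w (oneHole m a c)
  · exact ⟨_, by simp, hac⟩
  by_cases hbc : Meets w (oneHole m b c)
  · exact ⟨_, by simp, hbc⟩
  set P : ℤ := ((m - 1 : ℕ) : ℤ) with hP
  have forb : ∀ j : ℤ, w (j + P) = a ∨ (w j = c ∧ w (j + P) = b) := by
    intro j
    cases e0 : w j <;> cases e1 : w (j + P) <;> simp_all <;>
      first
        | exact hbb (meets_of_pair hm w _ _ j e0 e1)
        | exact hcc (meets_of_pair hm w _ _ j e0 e1)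
        | exact hab (meets_of_pair hm w _ _ j e0 e1)
        | exact hac (meets_of_pair hm w _ _ j e0 e1)
        | exact hbc (meets_of_pair hm w _ _ j e0 e1)
  have key : ∀ i : ℤ, w i = a := by
    intro i
    have h1 := forb (i - P)
    have h2 := forb (i - P - P)
    have e1 : i - P + P = i := by ring
    have e2 : i - P - P + P = i - P := by ring
    rw [e1] at h1; rw [e2] at h2
    rcases h1 with h1 | ⟨hc, hb⟩
    · exact h1
    · rcases h2 with h2 | ⟨_, hb2⟩
      · rw [h2] at hc; exact absurd hc (by simp)
      · rw [hb2] at hc; exact absurd hc (by simp)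
  refine ⟨u, by simp, 0, ?_⟩
  intro j x hj
  rw [hua j x hj]
  exact key _
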